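/- Let A be row-regular, p nonzero, q all finite, Δ = max_i(p_i - max_j(a_{ij}+q_j)), and let be the sparsified matrix with â_{ij} = a_{ij} when a_{ij} ≥ p_i - Δ - q_j and -∞ otherwise. Then for every finite vector x ∈ ℝ^n, f_Â(x) = Δ if and only if f_A(x) = Δ, where f_M(x) = max_j(x_j - q_j) + max_i(p_i - max_j(m_{ij}+x_j)). In particular, sparsification preserves the set of minimizers and the minimum value. -/

import Mathlib

/-- The max-plus objective `q⁻ x (A x)⁻ p`. -/
noncomputable def tropObj (m n : ℕ) (a : Matrix (Fin m) (Fin n) EReal)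
    (p : Fin m → EReal) (q x : Fin n → ℝ) : EReal :=
  (⨆ j, ((x j - q j : ℝ) : EReal)) +
    ⨆ i, (p i - ⨆ j, (a i j + ((x j : ℝ) : EReal)))

/-- The minimum value `Δ = (A q)⁻ p`. -/
noncomputable def tropDelta (m n : ℕ) (a : Matrix (Fin m) (Fin n) EReal)
    (p : Fin m → EReal) (q : Fin n → ℝ) : EReal :=
  ⨆ i, (p i - ⨆ j, (a i j + ((q j : ℝ) : EReal)))

/-!
Δ is a lower bound of the objective `f_A`, and `f_A ≤ f_Â` because `Â ≤ A` entrywise. Conversely,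
if `f_A x ≤ Δ`, then in every row `i` an index `j` attaining `max_j (a i j + x j)` satisfies
`a i j ≥ p i - Δ - q j`, because `x j - q j ≤ max_k (x k - q k)`; so that entry survives
sparsification, the row maxima of `A` and `Â` at `x` agree, and `f_Â x = f_A x`.
-/

namespace EReal

lemma sub_le_coe_add_sub {p s t : EReal} {c : ℝ} (h : t ≤ s + c) : p - s ≤ c + (p - t) := by
  induction p <;> induction s <;> induction t <;> simp_all [← EReal.coe_add, ← EReal.coe_sub]
  linarith

lemma sub_sub_coe_le_of_coe_add_sub_le {p α δ : EReal} {c x q : ℝ} (hc : x - q ≤ c)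
    (h : c + (p - (α + x)) ≤ δ) : p - δ - q ≤ α := by
  induction p <;> induction α <;> induction δ <;> simp_all [← EReal.coe_add, ← EReal.coe_sub]
  linarith

end EReal

lemma exists_coe_eq_iSup_sub {κ : Type*} [Finite κ] [Nonempty κ] (q x : κ → ℝ) :
    ∃ c : ℝ, (⨆ j, ((x j - q j : ℝ) : EReal)) = c ∧ ∀ j, x j - q j ≤ c := by
  obtain ⟨j, hj⟩ : ∃ j, ((x j - q j : ℝ) : EReal) = ⨆ k, ((x k - q k : ℝ) : EReal) :=
    exists_eq_ciSup_of_finite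
  refine ⟨x j - q j, hj.symm, fun k => EReal.coe_le_coe_iff.1 ?_⟩
  rw [hj]
  exact le_iSup (fun k => ((x k - q k : ℝ) : EReal)) k

section Sparsify

variable {ι κ : Type*} (a : Matrix ι κ EReal) (p : ι → EReal) (q : κ → ℝ) (δ : EReal)

noncomputable def tropSparsify : Matrix ι κ EReal :=
  fun i j => if p i - δ - q j ≤ a i j then a i j else ⊥

lemma tropSparsify_le (i : ι) (j : κ) : tropSparsify a p q δ i j ≤ a i j := by
  unfold tropSparsify
  split_ifs <;> simp

variable {a p q δ}

lemma iSup_tropSparsify_add_eq [Finite κ] [Nonempty κ] {x : κ → ℝ} {c : ℝ} {i : ι}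
    (hc : ∀ j, x j - q j ≤ c) (h : c + (p i - ⨆ j, a i j + x j) ≤ δ) :
    ⨆ j, tropSparsify a p q δ i j + x j = ⨆ j, a i j + x j := by
  obtain ⟨j, hj⟩ := exists_eq_ciSup_of_finite (f := fun j => a i j + x j)
  have kept : tropSparsify a p q δ i j = a i j :=
    if_pos (EReal.sub_sub_coe_le_of_coe_add_sub_le (hc j) (hj ▸ h))
  refine le_antisymm (iSup_mono fun j => add_le_add_left (tropSparsify_le a p q δ i j) _) ?_
  rw [← hj, ← kept]
  exact le_iSup (fun j => tropSparsify a p q δ i j + x j) j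

end Sparsify

section TropObj

variable {m n : ℕ} {p : Fin m → EReal} {q x : Fin n → ℝ}

lemma tropObj_le_tropObj {a b : Matrix (Fin m) (Fin n) EReal} (h : ∀ i j, b i j ≤ a i j) :
    tropObj m n a p q x ≤ tropObj m n b p q x :=
  add_le_add_right (iSup_mono fun i => EReal.sub_le_sub le_rfl
    (iSup_mono fun j => add_le_add_left (h i j) _)) _

variable [Nonempty (Fin n)]

lemma tropDelta_le_tropObj {a : Matrix (Fin m) (Fin n) EReal} :
    tropDelta m n a p q ≤ tropObj m n a p q x := by
  obtain ⟨c, hc, hxq⟩ := exists_coe_eq_iSup_sub q x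
  rw [tropObj, hc]
  refine iSup_le fun i => (EReal.sub_le_coe_add_sub (iSup_le fun j => ?_)).trans
    (add_le_add_right (le_iSup (fun i => p i - ⨆ j, a i j + ((x j : ℝ) : EReal)) i) _)
  calc a i j + ((x j : ℝ) : EReal) = a i j + q j + ((x j - q j : ℝ) : EReal) := by
        rw [add_assoc, ← EReal.coe_add, add_sub_cancel]
    _ ≤ (⨆ j, a i j + ((q j : ℝ) : EReal)) + c :=
        add_le_add (le_iSup (fun j => a i j + ((q j : ℝ) : EReal)) j)
          (EReal.coe_le_coe_iff.2 (hxq j))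

lemma tropObj_tropSparsify_eq_of_le {a : Matrix (Fin m) (Fin n) EReal} {δ : EReal}
    (h : tropObj m n a p q x ≤ δ) :
    tropObj m n (tropSparsify a p q δ) p q x = tropObj m n a p q x := by
  obtain ⟨c, hc, hxq⟩ := exists_coe_eq_iSup_sub q x
  rw [tropObj, hc] at h
  refine congrArg _ (iSup_congr fun i => congrArg _ (iSup_tropSparsify_add_eq hxq ?_))
  exact (add_le_add_right
    (le_iSup (fun i => p i - ⨆ j, a i j + ((x j : ℝ) : EReal)) i) _).trans h

end TropObj

open Classical in
theorem trop_sparsification_preserves_minimizers_general (m n : ℕ) (a : Matrix (Fin m) (Fin n) EReal)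
    (p : Fin m → EReal)
    (q : Fin n → ℝ) (x : Fin n → ℝ) :
    tropObj m n
        (fun i j => if p i - tropDelta m n a p q - ((q j : ℝ) : EReal) ≤ a i j
          then a i j else ⊥) p q x = tropDelta m n a p q ↔
      tropObj m n a p q x = tropDelta m n a p q := by
  change tropObj m n (tropSparsify a p q (tropDelta m n a p q)) p q x = _ ↔ _
  cases isEmpty_or_nonempty (Fin n)
  · rw [Subsingleton.elim (tropSparsify a p q _) a]
  constructor
  · intro h
    exact le_antisymm (h ▸ tropObj_le_tropObj (tropSparsify_le a p q _)) tropDelta_le_tropObj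
  · intro h
    rw [tropObj_tropSparsify_eq_of_le h.le, h]

open Classical in
/-- Sparsification preserves the minimum value and the set of minimizers: with
`Â i j = a i j` when `a i j ≥ p i - Δ - q j` and `-∞` otherwise, a regular vector `x`
attains the value `Δ` for `Â` iff it does for `A`. -/
theorem trop_sparsification_preserves_minimizers (m n : ℕ) (a : Matrix (Fin m) (Fin n) EReal)
    (hatop : ∀ i j, a i j ≠ ⊤) (harow : ∀ i, ∃ j, a i j ≠ ⊥)
    (p : Fin m → EReal) (hptop : ∀ i, p i ≠ ⊤) (hp : ∃ i, p i ≠ ⊥)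
    (q : Fin n → ℝ) (x : Fin n → ℝ) :
    tropObj m n
        (fun i j => if p i - tropDelta m n a p q - ((q j : ℝ) : EReal) ≤ a i j
          then a i j else ⊥) p q x = tropDelta m n a p q ↔
      tropObj m n a p q x = tropDelta m n a p q :=
  trop_sparsification_preserves_minimizers_general m n a p q x
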